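/- For every even n ≥ 4, the subgraph of QI(n,2) induced by uniform 2-partitions (both classes of size n/2) is a complete graph on (1/2)·C(n, n/2) vertices, and it is a core of QI(n,2): there is a homomorphism from QI(n,2) onto it. -/

import Mathlib

/-- Two partitions of `{1,…,n}` are qualitatively independent if every class of
one meets every class of the other. -/
def QIPart {n : ℕ} (P Q : Finpartition (Finset.univ : Finset (Fin n))) : Prop :=
  ∀ A ∈ P.parts, ∀ B ∈ Q.parts, (A ∩ B).Nonempty

/-- Vertices of `QI(n,2)`: 2-partitions of an `n`-set with both classes of size
at least 2. -/
def QIVertex (n k : ℕ) : Type :=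
  {P : Finpartition (Finset.univ : Finset (Fin n)) //
    P.parts.card = k ∧ ∀ A ∈ P.parts, k ≤ A.card}

/-- The qualitative independence graph. -/
def QIGraph (n k : ℕ) : SimpleGraph (QIVertex n k) :=
  SimpleGraph.fromRel fun P Q => QIPart P.1 Q.1

/-- The set of uniform vertices of `QI(n,2)`: both classes of size `n/2`. -/
def UniformVerts (n : ℕ) : Set (QIVertex n 2) :=
  {P | ∀ A ∈ P.1.parts, A.card = n / 2}

/-!
Two distinct uniform partitions `{A, Aᶜ}`, `{B, Bᶜ}` are qualitatively independent: a class of one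
missing a class of the other would be contained in its complement, and equal cardinalities force
`B = Aᶜ`. So the uniform vertices span a clique, and every endomorphism of a finite clique is
bijective.

For the retraction, Hall's theorem together with the local LYM inequality gives, for each level
`k < n/2` of the Boolean lattice, an injection into level `k + 1` along inclusion. Composing them
sends every set `S` with `|S| ≤ n/2` to a superset `F S` of size `n/2` such that `F S = F T` forces
`S` and `T` to be comparable. Send a partition to `{F S, (F S)ᶜ}`, where `S` is a class of size at
most `n/2`. If two partitions have the same image, then either `F S = F T`, so that (say) `S ⊆ T`
and `S` misses `Tᶜ`, or `F S = (F T)ᶜ`, so that `S` misses `T`: they are not qualitatively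
independent. Hence this is a homomorphism onto the clique.

A uniform partition is determined by its class containing `0`, and complementation shows that
exactly half of the `n/2`-sets contain `0`.
-/

open Finset
open scoped FinsetFamily

namespace Finset

variable {α : Type*} [Fintype α] [DecidableEq α]

theorem card_mul_le_card_upShadow_mul {𝒜 : Finset (Finset α)} {r : ℕ}
    (h𝒜 : (𝒜 : Set (Finset α)).Sized r) :
    #𝒜 * (Fintype.card α - r) ≤ #(∂⁺ 𝒜) * (r + 1) := by
  rcases le_or_gt r (Fintype.card α) with hr | hr
  · have := card_mul_le_card_shadow_mul h𝒜.compls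
    rwa [shadow_compls, card_compls, card_compls, Nat.sub_sub_self hr] at this
  · simp [Nat.sub_eq_zero_of_le hr.le]

theorem card_le_card_upShadow {𝒜 : Finset (Finset α)} {r : ℕ}
    (h𝒜 : (𝒜 : Set (Finset α)).Sized r) (hr : 2 * r < Fintype.card α) : #𝒜 ≤ #(∂⁺ 𝒜) :=
  Nat.le_of_mul_le_mul_right
    ((Nat.mul_le_mul_left _ (by omega)).trans (card_mul_le_card_upShadow_mul h𝒜)) r.succ_pos

theorem exists_injOn_subset_card_succ {r : ℕ} (hr : 2 * r < Fintype.card α) :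
    ∃ g : Finset α → Finset α,
      Set.InjOn g {s | #s = r} ∧ ∀ s, #s = r → s ⊆ g s ∧ #(g s) = r + 1 := by
  obtain ⟨g, hg_inj, hg⟩ := (Fintype.all_card_le_filter_rel_iff_exists_injective
    fun (s : {s : Finset α // #s = r}) (t : Finset α) => s.1 ⊆ t ∧ #t = r + 1).1 <| by
    intro 𝒮
    set 𝒜 := 𝒮.map (Function.Embedding.subtype _)
    have h𝒜 : (𝒜 : Set (Finset α)).Sized r := by
      intro s hs
      obtain ⟨s, -, rfl⟩ := mem_map.1 hs
      exact s.2
    have hup : ({t | ∃ s ∈ 𝒮, s.1 ⊆ t ∧ #t = r + 1} : Finset (Finset α)) = ∂⁺ 𝒜 := by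
      ext t
      simp only [mem_filter, mem_univ, true_and, mem_upShadow_iff_exists_mem_card_add_one, 𝒜,
        mem_map, Function.Embedding.coe_subtype]
      constructor
      · rintro ⟨s, hs, hst, ht⟩
        exact ⟨s, ⟨s, hs, rfl⟩, hst, by rw [ht, s.2]⟩
      · rintro ⟨_, ⟨s, hs, rfl⟩, hst, ht⟩
        exact ⟨s, hs, hst, by rw [ht, s.2]⟩
    rw [hup, ← card_map (Function.Embedding.subtype _)]
    exact card_le_card_upShadow h𝒜 hr
  refine ⟨fun s => if h : #s = r then g ⟨s, h⟩ else s, ?_,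
    fun s hs => by simpa [hs] using hg ⟨s, hs⟩⟩
  intro s (hs : #s = r) t (ht : #t = r) hst
  simp only [dif_pos hs, dif_pos ht] at hst
  exact congrArg Subtype.val (hg_inj hst)

structure IsLevelFill (m : ℕ) (f : Finset α → Finset α) : Prop where
  subset : ∀ s, #s ≤ m → s ⊆ f s
  card : ∀ s, #s ≤ m → #(f s) = m
  subset_of_eq : ∀ s t, #s ≤ #t → #t ≤ m → f s = f t → s ⊆ t

theorem exists_isLevelFill {m : ℕ} (hm : 2 * m ≤ Fintype.card α) :
    ∃ f : Finset α → Finset α, IsLevelFill m f := by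
  induction m with
  | zero => exact ⟨id, fun _ _ => subset_rfl, fun _ hs => by simpa using hs,
      fun _ _ _ _ h => h.subset⟩
  | succ m ih =>
    obtain ⟨f, hf⟩ := ih (by omega)
    obtain ⟨g, hg_inj, hg⟩ := exists_injOn_subset_card_succ (α := α) (r := m) (by omega)
    have hsub : ∀ s, #s ≤ m → s ⊆ g (f s) := fun s hs =>
      (hf.subset s hs).trans (hg _ (hf.card s hs)).1
    refine ⟨fun s => if #s = m + 1 then s else g (f s), fun s hs => ?_, fun s hs => ?_,
      fun s t hst ht heq => ?_⟩
    · split_ifs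
      · exact subset_rfl
      · exact hsub s (by omega)
    · split_ifs with h
      · exact h
      · exact (hg _ (hf.card s (by omega))).2
    · by_cases htm : #t = m + 1
      · by_cases hsm : #s = m + 1
        · simp only [if_pos hsm, if_pos htm] at heq
          exact heq.subset
        · simp only [if_neg hsm, if_pos htm] at heq
          exact heq ▸ hsub s (by omega)
      · have hsm : #s ≠ m + 1 := by omega
        simp only [if_neg hsm, if_neg htm] at heq
        exact hf.subset_of_eq s t hst (by omega)
          (hg_inj (hf.card s (by omega)) (hf.card t (by omega)) heq)

theorem card_filter_card_eq_half_mem (hα : Even (Fintype.card α)) (z : α) :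
    #{s : Finset α | #s = Fintype.card α / 2 ∧ z ∈ s} =
      (Fintype.card α).choose (Fintype.card α / 2) / 2 := by
  set N := Fintype.card α
  have hcompl : #{s : Finset α | #s = N / 2 ∧ z ∈ s} = #{s : Finset α | #s = N / 2 ∧ z ∉ s} := by
    have hcard : ∀ s : Finset α, #s = N / 2 → #sᶜ = N / 2 := fun s hs => by
      rw [card_compl, hs]; obtain ⟨m, hm⟩ := hα; omega
    refine card_nbij' compl compl (fun s hs => ?_) (fun s hs => ?_)
      (fun s _ => compl_compl s) (fun s _ => compl_compl s)
    · simp only [coe_filter, mem_univ, true_and, Set.mem_ofPred_eq, mem_compl, not_not] at hs ⊢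
      exact ⟨hcard s hs.1, hs.2⟩
    · simp only [coe_filter, mem_univ, true_and, Set.mem_ofPred_eq, mem_compl] at hs ⊢
      exact ⟨hcard s hs.1, hs.2⟩
  have hsplit : #{s : Finset α | #s = N / 2 ∧ z ∈ s} + #{s : Finset α | #s = N / 2 ∧ z ∉ s} =
      N.choose (N / 2) := by
    rw [← filter_filter, ← filter_filter, card_filter_add_card_filter_not, ← powerset_univ,
      ← powersetCard_eq_filter, card_powersetCard, card_univ]
  omega

end Finset

namespace Finpartition

variable {α : Type*} [Fintype α] [DecidableEq α]

theorem parts_eq_pair_compl {P : Finpartition (univ : Finset α)} (hP : #P.parts = 2)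
    {A : Finset α} (hA : A ∈ P.parts) : P.parts = {A, Aᶜ} := by
  obtain ⟨B, hB⟩ := card_eq_one.1 (by rw [card_erase_of_mem hA, hP] : #(P.parts.erase A) = 1)
  have hparts : P.parts = {A, B} := by rw [← insert_erase hA, hB]
  have hBA : B ≠ A := (mem_erase.1 (hB ▸ mem_singleton_self B)).1
  have hdisj : Disjoint A B := P.disjoint hA (by simp [hparts]) hBA.symm
  have hsup : A ⊔ B = ⊤ := by simpa [hparts] using P.sup_parts
  rw [hparts, (IsCompl.compl_eq ⟨hdisj, codisjoint_iff.2 hsup⟩)]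

theorem compl_mem_parts {P : Finpartition (univ : Finset α)} (hP : #P.parts = 2)
    {A : Finset α} (hA : A ∈ P.parts) : Aᶜ ∈ P.parts := by
  rw [parts_eq_pair_compl hP hA]
  exact mem_insert_of_mem (mem_singleton_self _)

def ofCompl (C : Finset α) (hC : C.Nonempty) (hCc : Cᶜ.Nonempty) :
    Finpartition (univ : Finset α) :=
  (indiscrete hC.ne_empty).extend hCc.ne_empty disjoint_compl_right sup_compl_eq_top

theorem ofCompl_parts (C : Finset α) (hC : C.Nonempty) (hCc : Cᶜ.Nonempty) :
    (ofCompl C hC hCc).parts = {Cᶜ, C} := rfl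

end Finpartition

theorem SimpleGraph.Hom.bijective_of_eq_top {V : Type*} [Finite V] {G : SimpleGraph V}
    (hG : G = ⊤) (φ : G →g G) : Function.Bijective φ := by
  subst hG
  exact Finite.injective_iff_bijective.1 φ.injective_of_top_hom

section QI

variable {n : ℕ}

theorem QIGraph.not_adj_of_disjoint {k : ℕ} {P Q : QIVertex n k} {A B : Finset (Fin n)}
    (hA : A ∈ P.1.parts) (hB : B ∈ Q.1.parts) (hAB : Disjoint A B) : ¬(QIGraph n k).Adj P Q := by
  rw [QIGraph, SimpleGraph.fromRel_adj]
  rintro ⟨-, h | h⟩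
  · exact not_disjoint_iff_nonempty_inter.2 (h A hA B hB) hAB
  · exact not_disjoint_iff_nonempty_inter.2 (h B hB A hA) hAB.symm

theorem QIGraph.not_adj_of_subset {P Q : QIVertex n 2} {S T : Finset (Fin n)}
    (hS : S ∈ P.1.parts) (hT : T ∈ Q.1.parts) (hST : S ⊆ T) : ¬(QIGraph n 2).Adj P Q :=
  not_adj_of_disjoint hS (Finpartition.compl_mem_parts Q.2.1 hT) (disjoint_compl_right_iff.2 hST)

theorem QIGraph.adj_of_mem_uniformVerts {P Q : QIVertex n 2} (hP : P ∈ UniformVerts n)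
    (hQ : Q ∈ UniformVerts n) (hne : P ≠ Q) : (QIGraph n 2).Adj P Q := by
  rw [QIGraph, SimpleGraph.fromRel_adj]
  refine ⟨hne, Or.inl fun A hA B hB => ?_⟩
  rw [← not_disjoint_iff_nonempty_inter]
  intro hAB
  have hBc := Finpartition.compl_mem_parts Q.2.1 hB
  have hABc : A = Bᶜ :=
    eq_of_subset_of_card_le (le_compl_iff_disjoint_right.2 hAB) (by rw [hP A hA, hQ _ hBc])
  refine hne (Subtype.ext (Finpartition.ext ?_))
  rw [Finpartition.parts_eq_pair_compl P.2.1 hA, Finpartition.parts_eq_pair_compl Q.2.1 hB, hABc,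
    compl_compl, pair_comm]

theorem QIVertex.exists_small_part (P : QIVertex n 2) : ∃ S ∈ P.1.parts, #S ≤ n / 2 := by
  obtain ⟨A, hA⟩ := card_pos.1 (by rw [P.2.1]; norm_num : 0 < #P.1.parts)
  by_cases h : #A ≤ n / 2
  · exact ⟨A, hA, h⟩
  · exact ⟨Aᶜ, Finpartition.compl_mem_parts P.2.1 hA, by rw [card_compl, Fintype.card_fin]; omega⟩

theorem card_compl_of_card_eq_half (hev : Even n) {C : Finset (Fin n)} (hC : #C = n / 2) :
    #Cᶜ = n / 2 := by
  rw [card_compl, Fintype.card_fin, hC]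
  obtain ⟨m, rfl⟩ := hev
  omega

def uniformVertex (hn : 4 ≤ n) (hev : Even n) (C : Finset (Fin n)) (hC : #C = n / 2) :
    QIVertex n 2 :=
  have hCc := card_compl_of_card_eq_half hev hC
  ⟨Finpartition.ofCompl C (card_pos.1 (by omega)) (card_pos.1 (by omega)), by
    obtain ⟨x, hx⟩ := card_pos.1 (by omega : 0 < #C)
    exact card_pair fun h => mem_compl.1 (h.symm ▸ hx) hx, by
    intro A hA
    rcases mem_insert.1 hA with rfl | hA
    · omega
    · rw [mem_singleton.1 hA]; omega⟩

section

variable {hn : 4 ≤ n} {hev : Even n}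

theorem uniformVertex_parts (C : Finset (Fin n)) (hC : #C = n / 2) :
    (uniformVertex hn hev C hC).1.parts = {Cᶜ, C} := rfl

theorem uniformVertex_mem (C : Finset (Fin n)) (hC : #C = n / 2) :
    uniformVertex hn hev C hC ∈ UniformVerts n := by
  intro A hA
  rcases mem_insert.1 hA with rfl | hA
  · exact card_compl_of_card_eq_half hev hC
  · rwa [mem_singleton.1 hA]

theorem eq_or_eq_compl_of_uniformVertex_eq {C D : Finset (Fin n)} {hC : #C = n / 2}
    {hD : #D = n / 2} (h : uniformVertex hn hev C hC = uniformVertex hn hev D hD) :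
    C = D ∨ C = Dᶜ := by
  have hmem : C ∈ (uniformVertex hn hev D hD).1.parts :=
    h ▸ mem_insert_of_mem (mem_singleton_self C)
  simpa [uniformVertex_parts, or_comm] using hmem

end

def uniformVertsEquiv (hn : 4 ≤ n) (hev : Even n) (z : Fin n) :
    UniformVerts n ≃ {C : Finset (Fin n) // #C = n / 2 ∧ z ∈ C} where
  toFun P := ⟨P.1.1.part z, P.2 _ (P.1.1.part_mem.2 (mem_univ z)), P.1.1.mem_part (mem_univ z)⟩
  invFun C := ⟨uniformVertex hn hev C.1 C.2.1, uniformVertex_mem _ _⟩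
  left_inv P := by
    refine Subtype.ext (Subtype.ext (Finpartition.ext ?_))
    rw [uniformVertex_parts, pair_comm,
      Finpartition.parts_eq_pair_compl P.1.2.1 (P.1.1.part_mem.2 (mem_univ z))]
  right_inv C := Subtype.ext <| Finpartition.part_eq_of_mem _
    (mem_insert_of_mem (mem_singleton_self _)) C.2.2

theorem card_uniformVerts (hn : 4 ≤ n) (hev : Even n) :
    Nat.card (UniformVerts n) = n.choose (n / 2) / 2 := by
  rw [Nat.card_congr (uniformVertsEquiv hn hev ⟨0, by omega⟩), Nat.card_eq_fintype_card,
    Fintype.card_subtype]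
  simpa using card_filter_card_eq_half_mem (α := Fin n) (by simpa using hev) ⟨0, by omega⟩

instance (k : ℕ) : Finite (QIVertex n k) := Subtype.finite

theorem QIGraph.induce_uniformVerts_eq_top : (QIGraph n 2).induce (UniformVerts n) = ⊤ := by
  ext P Q
  exact ⟨SimpleGraph.Adj.ne, fun h => adj_of_mem_uniformVerts P.2 Q.2 (Subtype.coe_injective.ne h)⟩

theorem QIGraph.not_adj_of_fill_eq {f : Finset (Fin n) → Finset (Fin n)}
    (hf : IsLevelFill (n / 2) f) {P Q : QIVertex n 2} {S T : Finset (Fin n)}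
    (hS : S ∈ P.1.parts) (hT : T ∈ Q.1.parts) (hSn : #S ≤ n / 2) (hTn : #T ≤ n / 2)
    (h : f S = f T) : ¬(QIGraph n 2).Adj P Q := by
  rcases le_total #S #T with hST | hTS
  · exact not_adj_of_subset hS hT (hf.subset_of_eq S T hST hTn h)
  · exact fun hPQ => not_adj_of_subset hT hS (hf.subset_of_eq T S hTS hSn h.symm) hPQ.symm

theorem QIGraph.not_adj_of_fill_eq_compl {f : Finset (Fin n) → Finset (Fin n)}
    (hf : IsLevelFill (n / 2) f) {P Q : QIVertex n 2} {S T : Finset (Fin n)}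
    (hS : S ∈ P.1.parts) (hT : T ∈ Q.1.parts) (hSn : #S ≤ n / 2) (hTn : #T ≤ n / 2)
    (h : f S = (f T)ᶜ) : ¬(QIGraph n 2).Adj P Q :=
  not_adj_of_disjoint hS hT <|
    (h ▸ disjoint_compl_left : Disjoint (f S) (f T)).mono (hf.subset S hSn) (hf.subset T hTn)

theorem QIGraph.nonempty_hom_induce_uniformVerts (hn : 4 ≤ n) (hev : Even n) :
    Nonempty (QIGraph n 2 →g (QIGraph n 2).induce (UniformVerts n)) := by
  obtain ⟨f, hf⟩ := exists_isLevelFill (α := Fin n) (m := n / 2) (by rw [Fintype.card_fin]; omega)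
  choose S hS hSn using QIVertex.exists_small_part (n := n)
  let retract (P : QIVertex n 2) : UniformVerts n :=
    ⟨uniformVertex hn hev (f (S P)) (hf.card _ (hSn P)), uniformVertex_mem _ _⟩
  refine ⟨⟨retract, fun {P Q} hPQ => adj_of_mem_uniformVerts (retract P).2 (retract Q).2
    fun h => ?_⟩⟩
  have h' : uniformVertex hn hev (f (S P)) (hf.card _ (hSn P)) =
      uniformVertex hn hev (f (S Q)) (hf.card _ (hSn Q)) := h
  rcases eq_or_eq_compl_of_uniformVertex_eq h' with h | h
  · exact not_adj_of_fill_eq hf (hS P) (hS Q) (hSn P) (hSn Q) h hPQ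
  · exact not_adj_of_fill_eq_compl hf (hS P) (hS Q) (hSn P) (hSn Q) h hPQ

end QI

/-- For even `n ≥ 4`, the subgraph of `QI(n,2)` induced by the uniform
2-partitions is a complete graph on `(1/2)·C(n, n/2)` vertices, and it is a core
of `QI(n,2)`: there is a homomorphism from `QI(n,2)` onto it, and every
endomorphism of it is an automorphism. -/
theorem uniform_core_QIGraph_two (n : ℕ) (hn : 4 ≤ n) (hev : Even n) :
    (∀ P Q : QIVertex n 2, P ∈ UniformVerts n → Q ∈ UniformVerts n → P ≠ Q →
        (QIGraph n 2).Adj P Q) ∧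
    Nat.card (UniformVerts n) = n.choose (n / 2) / 2 ∧
    Nonempty (QIGraph n 2 →g (QIGraph n 2).induce (UniformVerts n)) ∧
    (∀ φ : (QIGraph n 2).induce (UniformVerts n) →g
        (QIGraph n 2).induce (UniformVerts n), Function.Bijective φ) :=
  ⟨fun _ _ hP hQ hne => QIGraph.adj_of_mem_uniformVerts hP hQ hne, card_uniformVerts hn hev,
    QIGraph.nonempty_hom_induce_uniformVerts hn hev,
    SimpleGraph.Hom.bijective_of_eq_top QIGraph.induce_uniformVerts_eq_top⟩
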